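/- For every natural number α and every m ≥ 0, the second derivative of the function x ↦ e^{−x/2} L_m^α(x) satisfies d²/dx² ( e^{−x/2} L_m^α(x) ) = e^{−x/2} ( (1/4) L_m^α(x) + Σ_{k=0}^{m−1} (m−k) · L_k^α(x) ) for all real x. (This identity produces the coefficient h²/4 in front of R_m and the coefficients (m−k) in the right-hand-side sum of the Laguerre-transformed wave equations.) -/

import Mathlib

/-- The generalized Laguerre polynomial
`L_n^α(x) = ∑_{k=0}^{n} (−1)^k ⬝ C(n+α, n−k) ⬝ x^k / k!`. -/
noncomputable def lagPoly (α n : ℕ) (x : ℝ) : ℝ :=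
  ∑ k ∈ Finset.range (n + 1),
    (-1 : ℝ) ^ k * ((n + α).choose (n - k) : ℝ) * x ^ k / (Nat.factorial k : ℝ)

/-!
Termwise differentiation of the defining sum gives `(L_{n+1}^α)' = -L_n^{α+1}`, and Pascal's rule
gives `L_n^{α+1} = ∑_{k ≤ n} L_k^α`, hence `(L_m^α)' = -∑_{k < m} L_k^α`. For `f = e^{-x/2} g` one
has `f'' = e^{-x/2} (g'' - g' + g/4)`; with `g = L_m^α` the terms `-g' + g''` form the double sum
`∑_{k < m} ∑_{j ≤ k} L_j^α`, in which `L_k^α` occurs exactly `m - k` times.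
-/

open Finset Real

theorem lagPoly_zero (α : ℕ) (x : ℝ) : lagPoly α 0 x = 1 := by
  simp [lagPoly]

theorem lagPoly_succ_succ (α n : ℕ) (x : ℝ) :
    lagPoly (α + 1) (n + 1) x = lagPoly (α + 1) n x + lagPoly α (n + 1) x := by
  unfold lagPoly
  -- the top term `k = n + 1` is split off because `n - (n + 1)` truncates to `0`
  rw [sum_range_succ, sum_range_succ _ (n + 1), ← add_assoc (∑ k ∈ range (n + 1), _),
    ← sum_add_distrib]
  congr 1
  · refine sum_congr rfl fun k hk => ?_
    rw [mem_range] at hk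
    rw [show n + 1 + (α + 1) = (n + α + 1) + 1 by omega, show n + 1 - k = (n - k) + 1 by omega,
      Nat.choose_succ_succ', show n + 1 + α = n + α + 1 by omega,
      show n + (α + 1) = n + α + 1 by omega]
    push_cast
    ring
  · simp

theorem lagPoly_succ_eq_sum (α n : ℕ) (x : ℝ) :
    lagPoly (α + 1) n x = ∑ k ∈ range (n + 1), lagPoly α k x := by
  induction n with
  | zero => simp [lagPoly_zero]
  | succ n ih => rw [lagPoly_succ_succ, ih, sum_range_succ _ (n + 1)]

theorem hasDerivAt_lagPoly_succ (α n : ℕ) (x : ℝ) :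
    HasDerivAt (lagPoly α (n + 1)) (-lagPoly (α + 1) n x) x := by
  have h := HasDerivAt.fun_sum (u := range (n + 1 + 1)) fun k _ =>
    ((hasDerivAt_pow k x).const_mul
      ((-1 : ℝ) ^ k * ((n + 1 + α).choose (n + 1 - k) : ℝ))).div_const (Nat.factorial k : ℝ)
  refine h.congr_deriv ?_
  rw [sum_range_succ', lagPoly, ← sum_neg_distrib]
  simp only [CharP.cast_eq_zero, zero_mul, mul_zero, zero_div, add_zero]
  refine sum_congr rfl fun i _ => ?_
  rw [show n + 1 + α = n + (α + 1) by omega, Nat.add_sub_add_right, Nat.factorial_succ]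
  push_cast
  field_simp
  ring

theorem hasDerivAt_lagPoly (α n : ℕ) (x : ℝ) :
    HasDerivAt (lagPoly α n) (-∑ k ∈ range n, lagPoly α k x) x := by
  cases n with
  | zero => simpa [funext (lagPoly_zero α)] using hasDerivAt_const x (1 : ℝ)
  | succ n => simpa [lagPoly_succ_eq_sum] using hasDerivAt_lagPoly_succ α n x

theorem sum_range_sum_range_succ {R : Type*} [Ring R] (f : ℕ → R) (m : ℕ) :
    ∑ k ∈ range m, ∑ j ∈ range (k + 1), f j = ∑ k ∈ range m, ((m : R) - k) * f k := by
  induction m with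
  | zero => simp
  | succ m ih =>
    have h : ∀ k : ℕ, (((m + 1 : ℕ) : R) - k) * f k = ((m : R) - k) * f k + f k := fun k => by
      rw [Nat.cast_succ, add_sub_right_comm, add_mul, one_mul]
    rw [sum_range_succ, ih, sum_congr rfl fun k _ => h k, sum_add_distrib,
      sum_range_succ (fun k => ((m : R) - k) * f k), sub_self, zero_mul, add_zero]

theorem hasDerivAt_exp_neg_half_mul {g : ℝ → ℝ} {g' x : ℝ} (hg : HasDerivAt g g' x) :
    HasDerivAt (fun y => exp (-y / 2) * g y) (exp (-x / 2) * (g' - g x / 2)) x :=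
  ((((hasDerivAt_id' x).fun_neg).div_const 2).exp.fun_mul hg).congr_deriv (by ring)

theorem iteratedDeriv_two_exp_neg_half_mul {g g' g'' : ℝ → ℝ}
    (hg : ∀ y, HasDerivAt g (g' y) y) (hg' : ∀ y, HasDerivAt g' (g'' y) y) (x : ℝ) :
    iteratedDeriv 2 (fun y => exp (-y / 2) * g y) x =
      exp (-x / 2) * (g'' x - g' x + g x / 4) := by
  have hderiv : deriv (fun y => exp (-y / 2) * g y) = fun y => exp (-y / 2) * (g' y - g y / 2) :=
    funext fun y => (hasDerivAt_exp_neg_half_mul (hg y)).deriv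
  rw [iteratedDeriv_succ, iteratedDeriv_one, hderiv,
    (hasDerivAt_exp_neg_half_mul ((hg' x).fun_sub ((hg x).div_const 2))).deriv]
  ring

/-- `d²/dx² ( e^{−x/2} L_m^α(x) )
      = e^{−x/2} ( (1/4) L_m^α(x) + ∑_{k=0}^{m−1} (m−k) ⬝ L_k^α(x) )`. -/
theorem iteratedDeriv_two_exp_mul_lagPoly (α m : ℕ) (x : ℝ) :
    iteratedDeriv 2 (fun y : ℝ => Real.exp (-y / 2) * lagPoly α m y) x =
      Real.exp (-x / 2) *
        ((1 / 4) * lagPoly α m x +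
          ∑ k ∈ Finset.range m, ((m : ℝ) - (k : ℝ)) * lagPoly α k x) := by
  rw [iteratedDeriv_two_exp_neg_half_mul (hasDerivAt_lagPoly α m)
    (fun y => (HasDerivAt.fun_sum fun k _ => hasDerivAt_lagPoly α k y).neg),
    ← sum_range_sum_range_succ]
  simp only [sum_range_succ _ _, sum_add_distrib, sum_neg_distrib]
  ring
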